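/- Let A = ℤ[√2] be the ring of integers of ℚ(√2). If x, y, z ∈ A satisfy x⁴ + y⁴ = z⁴ then xyz = 0. -/

import Mathlib

/-!
The proof is Fermat's descent, run on the valuation at the prime `λ = √2` above `2` (note
`λ² = 2`). The ring `ℤ[√2]` is norm-Euclidean, so one may take `x, y` coprime. If neither is
divisible by `λ`, then `x⁴ + y⁴ ≡ 2 (mod 4)`, while `z⁴ ≡ 0` or `1`. Otherwise, say `y = λⁿ C`
with `λ ∤ C`; then `A = z²`, `B = x` solve `A² - τ² B⁴ = ε λ^(4n) C⁴` with units `τ = ε = 1`.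
The two factors `A ∓ τ B²` are `λ²` and `λ^(4n-2)` times coprime odd parts, which are therefore
unit multiples `ε₁ ρ⁴`, `μ σ⁴` of fourth powers. Reducing `τ B² = λ^(4n-4) μ σ⁴ - ε₁ ρ⁴` modulo
`4` shows that `-ε₁/τ` is congruent to an odd square, which for a unit `±(1 + √2)ᵏ` forces it to
be the square `η²` of a unit. This gives a solution `(B, ρ, σ, η, μ/τ)` with `n - 1` in place of
`n`, and the case `n = 1` is impossible.
-/

theorem Int.exists_two_mul_abs_sub_mul_le (x n : ℤ) (hn : n ≠ 0) :
    ∃ q : ℤ, 2 * |x - n * q| ≤ |n| := by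
  set q := round ((x : ℚ) / n)
  have hsplit : ((x - n * q : ℤ) : ℚ) = n * ((x : ℚ) / n - q) := by
    push_cast; field_simp
  have key : 2 * |((x - n * q : ℤ) : ℚ)| ≤ |(n : ℚ)| := by
    rw [hsplit, abs_mul]
    nlinarith [abs_nonneg (n : ℚ), abs_sub_round ((x : ℚ) / n)]
  exact ⟨q, by exact_mod_cast key⟩

theorem IsBezout.exists_eq_mul_isCoprime {R : Type*} [CommRing R] [IsDomain R] [IsBezout R]
    {x : R} (hx : x ≠ 0) (y : R) : ∃ d a b : R, d ≠ 0 ∧ x = d * a ∧ y = d * b ∧ IsCoprime a b := by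
  obtain ⟨a, ha⟩ := IsBezout.gcd_dvd_left x y
  obtain ⟨b, hb⟩ := IsBezout.gcd_dvd_right x y
  obtain ⟨p, q, hpq⟩ := IsBezout.gcd_eq_sum x y
  have hd : IsBezout.gcd x y ≠ 0 := fun hd => hx (by rw [ha, hd, zero_mul])
  refine ⟨_, a, b, hd, ha, hb, p, q, mul_left_cancel₀ hd ?_⟩
  linear_combination hpq - p * ha - q * hb

theorem eq_and_eq_of_pow_mul_eq_pow_mul {M : Type*} [CommMonoidWithZero M] [IsCancelMulZero M]
    {p u w : M} {k j : ℕ} (hp : p ≠ 0) (hu : ¬ p ∣ u) (hw : ¬ p ∣ w) (h : p ^ k * u = p ^ j * w) :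
    k = j ∧ u = w := by
  wlog hkj : k ≤ j generalizing k j u w
  · exact (this hw hu h.symm (le_of_not_ge hkj)).imp Eq.symm Eq.symm
  obtain ⟨i, rfl⟩ := Nat.exists_eq_add_of_le hkj
  rw [pow_add, mul_assoc] at h
  have hu' := mul_left_cancel₀ (pow_ne_zero k hp) h
  rcases i with _ | i
  · simpa using hu'
  · exact absurd (hu' ▸ dvd_mul_of_dvd_left (dvd_pow_self p i.succ_ne_zero) w) hu

namespace Zsqrtd

theorem sqrtd_dvd_iff {d : ℤ} (x : ℤ√d) : sqrtd ∣ x ↔ d ∣ x.re := by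
  constructor
  · rintro ⟨c, rfl⟩
    simp
  · rintro ⟨m, hm⟩
    exact ⟨⟨x.im, m⟩, by ext <;> simp [hm]⟩

theorem prime_sqrtd {d : ℤ} (hd : Prime d) : Prime (sqrtd : ℤ√d) := by
  refine ⟨fun h => hd.ne_zero (by simpa using congrArg im h), fun h => hd.not_isUnit ?_, ?_⟩
  · simpa [isUnit_iff_norm_isUnit, norm_def] using h
  · intro a b hab
    simp only [sqrtd_dvd_iff, re_mul] at hab ⊢
    exact hd.dvd_or_dvd ((dvd_add_left (dvd_mul_of_dvd_left (dvd_mul_right d _) _)).mp hab)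

theorem norm_ne_zero_of_ne_zero {b : ℤ√2} (hb : b ≠ 0) : b.norm ≠ 0 :=
  (norm_eq_zero (fun n h => Int.prime_two.not_isSquare ⟨n, h⟩) b).not.mpr hb

theorem exists_two_mul_abs_norm_sub_mul_le (a : ℤ√2) {b : ℤ√2} (hb : b ≠ 0) :
    ∃ q : ℤ√2, 2 * |(a - b * q).norm| ≤ |b.norm| := by
  have hN := norm_ne_zero_of_ne_zero hb
  set x := a * star b
  obtain ⟨q₁, hq₁⟩ := Int.exists_two_mul_abs_sub_mul_le x.re b.norm hN
  obtain ⟨q₂, hq₂⟩ := Int.exists_two_mul_abs_sub_mul_le x.im b.norm hN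
  refine ⟨⟨q₁, q₂⟩, ?_⟩
  -- `(a - b q) b̄ = a b̄ - N(b) q`, whose coordinates are the two remainders above
  have hmul : (a - b * ⟨q₁, q₂⟩).norm * b.norm
      = (x.re - b.norm * q₁) ^ 2 - 2 * (x.im - b.norm * q₂) ^ 2 := by
    rw [← norm_conj b, ← norm_mul, sub_mul, mul_right_comm, ← norm_eq_mul_conj]
    simp [norm_def, x]; ring
  have h₁ : 4 * (x.re - b.norm * q₁) ^ 2 ≤ b.norm ^ 2 := by
    nlinarith [abs_nonneg (x.re - b.norm * q₁), sq_abs (x.re - b.norm * q₁), sq_abs b.norm]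
  have h₂ : 4 * (x.im - b.norm * q₂) ^ 2 ≤ b.norm ^ 2 := by
    nlinarith [abs_nonneg (x.im - b.norm * q₂), sq_abs (x.im - b.norm * q₂), sq_abs b.norm]
  have h : 2 * |(a - b * ⟨q₁, q₂⟩).norm| * |b.norm| ≤ |b.norm| * |b.norm| := by
    rw [mul_assoc, ← abs_mul, hmul, abs_mul_abs_self]
    rcases abs_cases ((x.re - b.norm * q₁) ^ 2 - 2 * (x.im - b.norm * q₂) ^ 2)
      with ⟨h, -⟩ | ⟨h, -⟩ <;> rw [h] <;>
      nlinarith [sq_nonneg (x.re - b.norm * q₁), sq_nonneg (x.im - b.norm * q₂)]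
  exact le_of_mul_le_mul_right h (abs_pos.mpr hN)

noncomputable instance : EuclideanDomain (ℤ√2) where
  quotient a b := if hb : b = 0 then 0 else (exists_two_mul_abs_norm_sub_mul_le a hb).choose
  quotient_zero a := dif_pos rfl
  remainder a b :=
    a - b * if hb : b = 0 then 0 else (exists_two_mul_abs_norm_sub_mul_le a hb).choose
  quotient_mul_add_remainder_eq a b := add_sub_cancel _ _
  r := InvImage (· < ·) fun x => x.norm.natAbs
  r_wellFounded := InvImage.wf _ wellFounded_lt
  remainder_lt a b hb := by
    have h := (exists_two_mul_abs_norm_sub_mul_le a hb).choose_spec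
    have := Int.natAbs_pos.mpr (norm_ne_zero_of_ne_zero hb)
    simp only [InvImage, dif_neg hb]
    generalize (exists_two_mul_abs_norm_sub_mul_le a hb).choose = q at h ⊢
    rw [Int.abs_eq_natAbs, Int.abs_eq_natAbs] at h
    omega
  mul_left_not_lt a b hb := by
    simp only [InvImage, norm_mul, Int.natAbs_mul, not_lt]
    exact Nat.le_mul_of_pos_right _ (Int.natAbs_pos.mpr (norm_ne_zero_of_ne_zero hb))

theorem prime_sqrtd_two : Prime (sqrtd : ℤ√2) := prime_sqrtd Int.prime_two

theorem sqrtd_sq : (sqrtd : ℤ√2) ^ 2 = 2 := by rw [sq, dmuld]; rfl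

theorem sqrtd_pow_four : (sqrtd : ℤ√2) ^ 4 = 4 := by
  rw [show 4 = 2 * 2 by rfl, pow_mul, sqrtd_sq]; norm_num

theorem sqrtd_dvd_add {u w : ℤ√2} (hu : ¬ sqrtd ∣ u) (hw : ¬ sqrtd ∣ w) : sqrtd ∣ u + w := by
  rw [sqrtd_dvd_iff] at hu hw ⊢
  rw [re_add]
  omega

def fundamentalUnit : (ℤ√2)ˣ where
  val := ⟨1, 1⟩
  inv := ⟨-1, 1⟩
  val_inv := by ext <;> simp
  inv_val := by ext <;> simp

theorem isFundamental_three_two :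
    Pell.IsFundamental (Pell.Solution₁.mk (d := 2) 3 2 (by norm_num)) := by
  refine ⟨by simp, by simp, fun {b} hb => ?_⟩
  have := b.prop
  simp only [Pell.Solution₁.x_mk]
  by_contra! h
  have hx : b.x = 2 := by omega
  rw [hx] at this
  omega

theorem toUnits_three_two :
    Unitary.toUnits (Pell.Solution₁.mk (d := 2) 3 2 (by norm_num)) = fundamentalUnit ^ 2 := by
  ext <;> simp [fundamentalUnit, sq] <;> rfl

theorem exists_eq_zpow_or_eq_neg_zpow (u : (ℤ√2)ˣ) :
    ∃ n : ℤ, u = fundamentalUnit ^ n ∨ u = -fundamentalUnit ^ n := by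
  have key (v : (ℤ√2)ˣ) (hv : (v : ℤ√2).norm = 1) :
      ∃ n : ℤ, v = fundamentalUnit ^ (2 * n) ∨ v = -fundamentalUnit ^ (2 * n) := by
    let a : Pell.Solution₁ 2 := ⟨v, norm_eq_one_iff_mem_unitary.mp hv⟩
    obtain ⟨n, h⟩ := isFundamental_three_two.eq_zpow_or_neg_zpow a
    let f : Pell.Solution₁ 2 →* (ℤ√2)ˣ := Unitary.toUnits
    have hf : f (Pell.Solution₁.mk 3 2 (by norm_num)) = fundamentalUnit ^ 2 := toUnits_three_two
    have hv : v = f a := Units.ext rfl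
    refine ⟨n, h.imp (fun h => ?_) (fun h => ?_)⟩
    · rw [hv, h, map_zpow, hf, ← zpow_natCast, ← zpow_mul, Nat.cast_ofNat]
    · have hneg (x) : f (-x) = -f x := Units.ext rfl
      rw [hv, h, hneg, map_zpow, hf, ← zpow_natCast, ← zpow_mul, Nat.cast_ofNat]
  -- Pell theory covers the units of norm `1`; the fundamental unit has norm `-1`
  have hε : (fundamentalUnit : ℤ√2).norm = -1 := rfl
  rcases Int.natAbs_eq_iff.mp (norm_eq_one_iff.mpr u.isUnit) with h | h
  · obtain ⟨n, hn⟩ := key u h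
    exact ⟨2 * n, hn⟩
  · obtain ⟨n, hn⟩ := key (u * fundamentalUnit) (by rw [Units.val_mul, norm_mul, h, hε]; rfl)
    refine ⟨2 * n - 1, hn.imp (fun hn => ?_) (fun hn => ?_)⟩
    · rw [zpow_sub_one, ← hn, mul_inv_cancel_right]
    · rw [zpow_sub_one, ← neg_mul, ← hn, mul_inv_cancel_right]

theorem exists_mem_mul_sq (u : (ℤ√2)ˣ) :
    ∃ s ∈ ({1, -1, fundamentalUnit, -fundamentalUnit} : Set (ℤ√2)ˣ), ∃ η, u = s * η ^ 2 := by
  obtain ⟨n, hn⟩ := exists_eq_zpow_or_eq_neg_zpow u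
  have hsq (k : ℤ) : fundamentalUnit ^ (2 * k) = (fundamentalUnit ^ k) ^ 2 := by
    rw [← zpow_natCast, ← zpow_mul, mul_comm]; rfl
  obtain ⟨k, rfl | rfl⟩ := Int.even_or_odd' n
  · rcases hn with rfl | rfl
    · exact ⟨1, by simp, fundamentalUnit ^ k, by rw [one_mul, hsq]⟩
    · exact ⟨-1, by simp, fundamentalUnit ^ k, by rw [neg_one_mul, hsq]⟩
  · rcases hn with rfl | rfl
    · exact ⟨fundamentalUnit, by simp, fundamentalUnit ^ k, by rw [zpow_add_one, hsq, mul_comm]⟩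
    · exact ⟨-fundamentalUnit, by simp, fundamentalUnit ^ k,
        by rw [zpow_add_one, hsq, neg_mul, mul_comm]⟩

theorem four_dvd_iff (x : ℤ√2) : 4 ∣ x ↔ 4 ∣ x.re ∧ 4 ∣ x.im := by
  exact_mod_cast intCast_dvd 4 x

theorem four_dvd_sq_sub_one_or_four_dvd_sq_sub {x : ℤ√2} (hx : ¬ sqrtd ∣ x) :
    4 ∣ x ^ 2 - 1 ∨ 4 ∣ x ^ 2 - ⟨3, 2⟩ := by
  obtain ⟨m, hm⟩ : Odd x.re :=
    Int.not_even_iff_odd.mp (by simpa [sqrtd_dvd_iff, even_iff_two_dvd] using hx)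
  simp only [four_dvd_iff, sq, re_sub, im_sub, re_mul, im_mul, re_one, im_one, hm]
  obtain ⟨l, hl | hl⟩ := Int.even_or_odd' x.im <;> rw [hl]
  · exact .inl ⟨⟨m ^ 2 + m + 2 * l ^ 2, by ring⟩, ⟨(2 * m + 1) * l, by ring⟩⟩
  · exact .inr ⟨⟨m ^ 2 + m + 2 * l ^ 2 + 2 * l, by ring⟩, ⟨2 * m * l + m + l, by ring⟩⟩

theorem four_dvd_pow_four_sub_one {x : ℤ√2} (hx : ¬ sqrtd ∣ x) : 4 ∣ x ^ 4 - 1 := by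
  rcases four_dvd_sq_sub_one_or_four_dvd_sq_sub hx with ⟨r, hr⟩ | ⟨r, hr⟩
  · exact ⟨r * (x ^ 2 + 1), by linear_combination (x ^ 2 + 1) * hr⟩
  · have hθ : (⟨3, 2⟩ : ℤ√2) ^ 2 = 1 + 4 * ⟨4, 3⟩ := by decide
    exact ⟨r * (x ^ 2 + ⟨3, 2⟩) + ⟨4, 3⟩, by linear_combination (x ^ 2 + ⟨3, 2⟩) * hr + hθ⟩

theorem isSquare_of_four_dvd_sq_sub {v : (ℤ√2)ˣ} {x : ℤ√2} (hx : ¬ sqrtd ∣ x)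
    (h : 4 ∣ x ^ 2 - v) : IsSquare v := by
  obtain ⟨s, hs, η, rfl⟩ := exists_mem_mul_sq v
  set y := x * ↑η⁻¹
  have hy : ¬ sqrtd ∣ y := fun hd => hx (by simpa [y] using dvd_mul_of_dvd_left hd (η : ℤ√2))
  have hys : 4 ∣ y ^ 2 - s := by
    obtain ⟨r, hr⟩ := h
    refine ⟨r * (↑η⁻¹) ^ 2, ?_⟩
    have := η.mul_inv
    simp only [Units.val_mul, Units.val_pow_eq_pow_val] at hr
    linear_combination (↑η⁻¹ : ℤ√2) ^ 2 * hr + s * (η * ↑η⁻¹ + 1) * this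
  have hs' : 4 ∣ (s : ℤ√2) - 1 ∨ 4 ∣ (s : ℤ√2) - ⟨3, 2⟩ :=
    (four_dvd_sq_sub_one_or_four_dvd_sq_sub hy).imp
      (fun h1 => sub_sub_sub_cancel_left _ _ (y ^ 2) ▸ dvd_sub h1 hys)
      (fun h1 => sub_sub_sub_cancel_left _ _ (y ^ 2) ▸ dvd_sub h1 hys)
  rcases hs with rfl | rfl | rfl | rfl
  · exact ⟨η, by rw [one_mul, sq]⟩
  -- none of `-1`, `±(1 + √2)` is congruent to `1` or `3 + 2√2 = (1 + √2)²` modulo `4`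
  all_goals simp [four_dvd_iff, fundamentalUnit] at hs'

structure DescentSolution (n : ℕ) (A B C : ℤ√2) (τ ε : (ℤ√2)ˣ) : Prop where
  not_dvd_A : ¬ sqrtd ∣ A
  not_dvd_B : ¬ sqrtd ∣ B
  not_dvd_C : ¬ sqrtd ∣ C
  isCoprime : IsCoprime A B
  eq : A ^ 2 - (τ : ℤ√2) ^ 2 * B ^ 4 = (ε : ℤ√2) * sqrtd ^ (4 * n) * C ^ 4

theorem eq_two_and_lt_of_pow_mul_add_pow_mul {A u w : ℤ√2} {k j : ℕ} (hA : ¬ sqrtd ∣ A)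
    (hu : ¬ sqrtd ∣ u) (hw : ¬ sqrtd ∣ w) (hkj : k ≤ j) (hkj₂ : 2 < k + j)
    (h : sqrtd ^ k * u + sqrtd ^ j * w = sqrtd ^ 2 * A) : k = 2 ∧ k < j := by
  obtain hlt | rfl := hkj.lt_or_eq
  · have hodd : ¬ sqrtd ∣ u + sqrtd ^ (j - k) * w := fun hd =>
      hu ((dvd_add_left (dvd_mul_of_dvd_left (dvd_pow_self _ (by omega)) w)).mp hd)
    refine ⟨(eq_and_eq_of_pow_mul_eq_pow_mul prime_sqrtd_two.ne_zero hodd hA ?_).1, hlt⟩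
    rw [← h, mul_add, ← mul_assoc, ← pow_add, Nat.add_sub_cancel' hkj]
  · -- `u + w` is even, so `√2 ^ (k + 1) ∣ √2 ^ 2 * A` with `k ≥ 2`
    obtain ⟨t, ht⟩ := sqrtd_dvd_add hu hw
    obtain ⟨i, rfl⟩ : ∃ i, k = i + 2 := ⟨k - 2, by omega⟩
    refine absurd ((mul_dvd_mul_iff_left (pow_ne_zero 2 prime_sqrtd_two.ne_zero)).mp
      ⟨sqrtd ^ i * t, ?_⟩) hA
    rw [← h, ← mul_add, ht]
    ring

theorem exists_descentSolution {m : ℕ} {B ρ σ : ℤ√2} {τ μ ε : (ℤ√2)ˣ} (hm : 1 ≤ m)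
    (hB : ¬ sqrtd ∣ B) (hρ : ¬ sqrtd ∣ ρ) (hσ : ¬ sqrtd ∣ σ) (hBρ : IsCoprime B ρ)
    (h : (τ : ℤ√2) * B ^ 2 = sqrtd ^ (4 * m) * (σ ^ 4 * (μ : ℤ√2)) - ρ ^ 4 * (ε : ℤ√2)) :
    ∃ τ' ε', DescentSolution m B ρ σ τ' ε' := by
  have hinv : (↑τ⁻¹ : ℤ√2) * τ = 1 := τ.inv_mul
  obtain ⟨a, ha⟩ : 4 ∣ sqrtd ^ (4 * m) := by
    rw [pow_mul, sqrtd_pow_four]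
    exact dvd_pow_self 4 (by omega)
  obtain ⟨b, hb⟩ := four_dvd_pow_four_sub_one hρ
  have hν : 4 ∣ B ^ 2 - ↑(-τ⁻¹ * ε) := by
    refine ⟨↑τ⁻¹ * (a * (σ ^ 4 * μ) - ε * b), ?_⟩
    push_cast
    linear_combination ↑τ⁻¹ * h - B ^ 2 * hinv + ↑τ⁻¹ * (σ ^ 4 * μ) * ha - ↑τ⁻¹ * ε * hb
  obtain ⟨η, hη⟩ := isSquare_of_four_dvd_sq_sub hB hν
  have hη' : -(↑τ⁻¹ : ℤ√2) * ε = η * η := by exact_mod_cast congrArg Units.val hη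
  refine ⟨η, τ⁻¹ * μ, hB, hρ, hσ, hBρ, ?_⟩
  push_cast
  linear_combination ↑τ⁻¹ * h - B ^ 2 * hinv + ρ ^ 4 * hη'

theorem DescentSolution.exists_pred_of_le {n : ℕ} {A B C : ℤ√2} {τ ε : (ℤ√2)ˣ}
    (h : DescentSolution n A B C τ ε) (hn : 1 ≤ n) {k j : ℕ} {u w : ℤ√2}
    (hu : ¬ sqrtd ∣ u) (hw : ¬ sqrtd ∣ w) (hP : A - (τ : ℤ√2) * B ^ 2 = sqrtd ^ k * u)
    (hQ : A + (τ : ℤ√2) * B ^ 2 = sqrtd ^ j * w) (hkj : k ≤ j) :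
    2 ≤ n ∧ ∃ A' B' C' τ' ε', DescentSolution (n - 1) A' B' C' τ' ε' := by
  have hp := prime_sqrtd_two
  have hp2 : (sqrtd : ℤ√2) ^ 2 ≠ 0 := pow_ne_zero 2 hp.ne_zero
  obtain ⟨hkj', huw⟩ : k + j = 4 * n ∧ u * w = (ε : ℤ√2) * C ^ 4 := by
    refine eq_and_eq_of_pow_mul_eq_pow_mul hp.ne_zero (fun hd => (hp.dvd_or_dvd hd).elim hu hw)
      (fun hd => (hp.dvd_or_dvd hd).elim (fun hε => hp.not_isUnit (isUnit_of_dvd_unit hε ε.isUnit))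
        (fun hC => h.not_dvd_C (hp.dvd_of_dvd_pow hC))) ?_
    rw [pow_add]
    linear_combination h.eq - (A + (τ : ℤ√2) * B ^ 2) * hP - sqrtd ^ k * u * hQ
  obtain ⟨rfl, hlt⟩ := eq_two_and_lt_of_pow_mul_add_pow_mul h.not_dvd_A hu hw hkj (by omega)
    (by linear_combination -hP - hQ - A * sqrtd_sq)
  obtain ⟨m, rfl⟩ : ∃ m, n = m + 1 := ⟨n - 1, by omega⟩
  obtain rfl : j = 4 * m + 2 := by omega
  have hcop : IsCoprime u w := by
    obtain ⟨a, b, hab⟩ :=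
      (isCoprime_mul_unit_left_right τ.isUnit A (B ^ 2)).mpr h.isCoprime.pow_right
    refine ⟨a - b, (a + b) * sqrtd ^ (4 * m), mul_left_cancel₀ hp2 ?_⟩
    linear_combination 2 * hab - (a - b) * hP - (a + b) * hQ - sqrtd_sq
  obtain ⟨ρ, ε₁, hρ⟩ := exists_associated_pow_of_associated_pow_mul hcop ⟨ε, by rw [huw, mul_comm]⟩
  obtain ⟨σ, μ, hσ⟩ :=
    exists_associated_pow_of_associated_pow_mul hcop.symm ⟨ε, by rw [mul_comm w, huw, mul_comm]⟩
  have hBρ : IsCoprime B ρ := by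
    have := h.isCoprime.add_mul_left_left (-((τ : ℤ√2) * B))
    rw [show A + B * -((τ : ℤ√2) * B) = sqrtd ^ 2 * ρ ^ 4 * (ε₁ : ℤ√2) by
      linear_combination hP - sqrtd ^ 2 * hρ] at this
    exact ((IsCoprime.pow_left_iff four_pos).mp this.of_mul_left_left.of_mul_left_right).symm
  have hτB : (τ : ℤ√2) * B ^ 2 = sqrtd ^ (4 * m) * (σ ^ 4 * (μ : ℤ√2)) - ρ ^ 4 * (ε₁ : ℤ√2) :=
    mul_left_cancel₀ hp2 (by linear_combination hQ - hP + (τ : ℤ√2) * B ^ 2 * sqrtd_sq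
      - sqrtd ^ (4 * m + 2) * hσ + sqrtd ^ 2 * hρ)
  rw [Nat.add_sub_cancel]
  exact ⟨by omega, B, ρ, σ, exists_descentSolution (by omega) h.not_dvd_B
    (fun hd => hu (hρ ▸ dvd_mul_of_dvd_left (dvd_pow hd four_ne_zero) _))
    (fun hd => hw (hσ ▸ dvd_mul_of_dvd_left (dvd_pow hd four_ne_zero) _)) hBρ hτB⟩

theorem DescentSolution.exists_pred {n : ℕ} {A B C : ℤ√2} {τ ε : (ℤ√2)ˣ}
    (h : DescentSolution n A B C τ ε) (hn : 1 ≤ n) :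
    2 ≤ n ∧ ∃ A' B' C' τ' ε', DescentSolution (n - 1) A' B' C' τ' ε' := by
  have hp := prime_sqrtd_two.irreducible
  have hPQ : (A - (τ : ℤ√2) * B ^ 2) * (A + (τ : ℤ√2) * B ^ 2)
      = (ε : ℤ√2) * sqrtd ^ (4 * n) * C ^ 4 := by
    linear_combination h.eq
  have hne : (ε : ℤ√2) * sqrtd ^ (4 * n) * C ^ 4 ≠ 0 :=
    mul_ne_zero (mul_ne_zero ε.ne_zero (pow_ne_zero _ hp.ne_zero))
      (pow_ne_zero _ fun hC => h.not_dvd_C (hC ▸ dvd_zero _))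
  rw [← hPQ] at hne
  obtain ⟨k, u, hu, hP⟩ := WfDvdMonoid.max_power_factor (left_ne_zero_of_mul hne) hp
  obtain ⟨j, w, hw, hQ⟩ := WfDvdMonoid.max_power_factor (right_ne_zero_of_mul hne) hp
  rcases le_total k j with hkj | hjk
  · exact h.exists_pred_of_le hn hu hw hP hQ hkj
  · -- exchanging the two factors replaces `τ` by `-τ`
    have h' : DescentSolution n A B C (-τ) ε := { h with eq := by simpa using h.eq }
    exact h'.exists_pred_of_le hn hw hu (by simpa [← sub_eq_add_neg] using hQ)
      (by simpa [← sub_eq_add_neg] using hP) hjk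

theorem not_descentSolution {n : ℕ} (hn : 1 ≤ n) (A B C : ℤ√2) (τ ε : (ℤ√2)ˣ) :
    ¬ DescentSolution n A B C τ ε := by
  induction n using Nat.strong_induction_on generalizing A B C τ ε with
  | _ n ih =>
    intro h
    obtain ⟨hn2, A', B', C', τ', ε', h'⟩ := h.exists_pred hn
    exact ih (n - 1) (by omega) (by omega) A' B' C' τ' ε' h'

theorem pow_four_add_pow_four_ne_of_not_dvd {a b : ℤ√2} (ha : ¬ sqrtd ∣ a) (hb : ¬ sqrtd ∣ b)
    (c : ℤ√2) : a ^ 4 + b ^ 4 ≠ c ^ 4 := by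
  intro h
  have h2 : 4 ∣ c ^ 4 - 2 := by
    rw [← h, show a ^ 4 + b ^ 4 - 2 = (a ^ 4 - 1) + (b ^ 4 - 1) by ring]
    exact dvd_add (four_dvd_pow_four_sub_one ha) (four_dvd_pow_four_sub_one hb)
  by_cases hc : sqrtd ∣ c
  · obtain ⟨e, rfl⟩ := hc
    rw [mul_pow, sqrtd_pow_four] at h2
    have := dvd_sub (dvd_mul_right 4 (e ^ 4)) h2
    rw [sub_sub_cancel] at this
    simp [four_dvd_iff] at this
  · have := dvd_sub (four_dvd_pow_four_sub_one hc) h2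
    rw [sub_sub_sub_cancel_left] at this
    simp [four_dvd_iff] at this

theorem pow_four_add_pow_four_ne_of_dvd {a b : ℤ√2} (hab : IsCoprime a b) (ha : ¬ sqrtd ∣ a)
    (hb : b ≠ 0) (hb' : sqrtd ∣ b) (c : ℤ√2) : a ^ 4 + b ^ 4 ≠ c ^ 4 := by
  intro h
  have hp := prime_sqrtd_two
  obtain ⟨k, b₁, hb₁, rfl⟩ := WfDvdMonoid.max_power_factor hb hp.irreducible
  have hk : 1 ≤ k := Nat.pos_of_ne_zero fun hk => hb₁ (by simpa [hk] using hb')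
  have hc : ¬ sqrtd ∣ c := fun hc => ha (hp.dvd_of_dvd_pow (n := 4) (by
    rw [show a ^ 4 = c ^ 4 - (sqrtd ^ k * b₁) ^ 4 by rw [← h]; ring]
    exact dvd_sub (dvd_pow hc four_ne_zero) (dvd_pow hb' four_ne_zero)))
  have hca : IsCoprime (c ^ 2) a := by
    have := (hab.pow (m := 4) (n := 4)).add_mul_left_right 1
    rw [mul_one, add_comm, h] at this
    exact ((IsCoprime.pow_iff four_pos four_pos).mp this).symm.pow_left
  refine not_descentSolution hk (c ^ 2) a b₁ 1 1
    ⟨fun hd => hc (hp.dvd_of_dvd_pow hd), ha, hb₁, hca, ?_⟩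
  simp only [Units.val_one]
  linear_combination -h

theorem pow_four_add_pow_four_ne_of_isCoprime {a b : ℤ√2} (hab : IsCoprime a b) (ha : a ≠ 0)
    (hb : b ≠ 0) (c : ℤ√2) : a ^ 4 + b ^ 4 ≠ c ^ 4 := by
  by_cases ha' : sqrtd ∣ a <;> by_cases hb' : sqrtd ∣ b
  · exact absurd (hab.isUnit_of_dvd' ha' hb') prime_sqrtd_two.not_isUnit
  · rw [add_comm]
    exact pow_four_add_pow_four_ne_of_dvd hab.symm hb' ha ha' c
  · exact pow_four_add_pow_four_ne_of_dvd hab ha' hb hb' c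
  · exact pow_four_add_pow_four_ne_of_not_dvd ha' hb' c

end Zsqrtd

/-- Fermat's Last Theorem for exponent 4 over ℤ[√2]. -/
theorem stmt_10 (x y z : ℤ√2) (h : x ^ 4 + y ^ 4 = z ^ 4) : x * y * z = 0 := by
  by_contra hxyz
  have hx : x ≠ 0 := left_ne_zero_of_mul (left_ne_zero_of_mul hxyz)
  have hy : y ≠ 0 := right_ne_zero_of_mul (left_ne_zero_of_mul hxyz)
  obtain ⟨d, a, b, hd, rfl, rfl, hab⟩ := IsBezout.exists_eq_mul_isCoprime hx y
  obtain ⟨c, rfl⟩ : d ∣ z := (IsIntegrallyClosed.pow_dvd_pow_iff four_ne_zero).mp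
    ⟨a ^ 4 + b ^ 4, by rw [← h]; ring⟩
  refine Zsqrtd.pow_four_add_pow_four_ne_of_isCoprime hab (right_ne_zero_of_mul hx)
    (right_ne_zero_of_mul hy) c (mul_left_cancel₀ (pow_ne_zero 4 hd) ?_)
  linear_combination h
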